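/- Suppose L_n : I → ℝ satisfies |L(E) − (2L_{2n}(E) − L_n(E))| ≤ C₀ e^{−c₀ n} for all E ∈ I and n, and |L_n(E) − L_n(E')| ≤ C₁ Γ^{n−1}|E − E'| for all E, E' ∈ I. Then L is Hölder continuous on I: there exist C > 0 and β > 0 with |L(E) − L(E')| ≤ C|E − E'|^β for all E, E' ∈ I. -/
import Mathlib

open Set

lemma key_combined (I : Set ℝ) (L : ℝ → ℝ) (Ln : ℕ → ℝ → ℝ)
    (C₀ C₁ c₀ Γ : ℝ) (hC₁ : 0 < C₁) (hΓ : 1 < Γ)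
    (happrox : ∀ E ∈ I, ∀ n : ℕ, 1 ≤ n →
      |L E - (2 * Ln (2 * n) E - Ln n E)| ≤ C₀ * Real.exp (-c₀ * n))
    (hlip : ∀ E ∈ I, ∀ E' ∈ I, ∀ n : ℕ, 1 ≤ n →
      |Ln n E - Ln n E'| ≤ C₁ * Γ ^ (n - 1) * |E - E'|)
    (E : ℝ) (hE : E ∈ I) (E' : ℝ) (hE' : E' ∈ I) (n : ℕ) (hn : 1 ≤ n) :
    |L E - L E'| ≤ 2 * C₀ * Real.exp (-c₀ * n) + 3 * C₁ * Γ ^ (2 * n) * |E - E'| := by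
  have h1 := happrox E hE n hn
  have h2 := happrox E' hE' n hn
  have h3 := hlip E hE E' hE' n hn
  have h4 := hlip E hE E' hE' (2 * n) (by omega)
  have hδ : (0:ℝ) ≤ |E - E'| := abs_nonneg _
  have hp1 : Γ ^ (n - 1) ≤ Γ ^ (2 * n) := pow_le_pow_right₀ hΓ.le (by omega)
  have hp2 : Γ ^ (2 * n - 1) ≤ Γ ^ (2 * n) := pow_le_pow_right₀ hΓ.le (by omega)
  have hm1 : C₁ * Γ ^ (n - 1) * |E - E'| ≤ C₁ * Γ ^ (2 * n) * |E - E'| := by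
    apply mul_le_mul_of_nonneg_right _ hδ
    exact mul_le_mul_of_nonneg_left hp1 hC₁.le
  have hm2 : C₁ * Γ ^ (2 * n - 1) * |E - E'| ≤ C₁ * Γ ^ (2 * n) * |E - E'| := by
    apply mul_le_mul_of_nonneg_right _ hδ
    exact mul_le_mul_of_nonneg_left hp2 hC₁.le
  set P := 2 * Ln (2 * n) E - Ln n E with hP
  set P' := 2 * Ln (2 * n) E' - Ln n E' with hP'
  have tri : |L E - L E'| ≤ |L E - P| + |P - P'| + |P' - L E'| := by
    calc |L E - L E'| ≤ |L E - P'| + |P' - L E'| := abs_sub_le _ _ _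
      _ ≤ (|L E - P| + |P - P'|) + |P' - L E'| := by
          have := abs_sub_le (L E) P P'
          linarith
  have hmid : |P - P'| ≤ 2 * |Ln (2 * n) E - Ln (2 * n) E'| + |Ln n E - Ln n E'| := by
    have heq : P - P' = 2 * (Ln (2 * n) E - Ln (2 * n) E') + -(Ln n E - Ln n E') := by
      rw [hP, hP']; ring
    rw [heq]
    calc |2 * (Ln (2 * n) E - Ln (2 * n) E') + -(Ln n E - Ln n E')|
        ≤ |2 * (Ln (2 * n) E - Ln (2 * n) E')| + |-(Ln n E - Ln n E')| := abs_add_le _ _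
      _ = 2 * |Ln (2 * n) E - Ln (2 * n) E'| + |Ln n E - Ln n E'| := by
          rw [abs_neg, abs_mul]; norm_num
  have h2' : |P' - L E'| ≤ C₀ * Real.exp (-c₀ * n) := by rw [abs_sub_comm]; exact h2
  linarith

set_option maxHeartbeats 1000000 in
/-- Hölder continuity of the Lyapunov exponent from the
approximation estimate `|L − (2L_{2n} − L_n)| ≤ C₀e^{−c₀n}` and the Lipschitz
bound `|L_n(E) − L_n(E')| ≤ C₁Γ^{n−1}|E−E'|`. -/
theorem lyapunov_holder_continuity
    (aI bI : ℝ) (I : Set ℝ) (hI : I = Icc aI bI)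
    (L : ℝ → ℝ) (Ln : ℕ → ℝ → ℝ)
    (C₀ C₁ c₀ Γ : ℝ) (hC₀ : 0 < C₀) (hC₁ : 0 < C₁) (hc₀ : 0 < c₀) (hΓ : 1 < Γ)
    (happrox : ∀ E ∈ I, ∀ n : ℕ, 1 ≤ n →
      |L E - (2 * Ln (2 * n) E - Ln n E)| ≤ C₀ * Real.exp (-c₀ * n))
    (hlip : ∀ E ∈ I, ∀ E' ∈ I, ∀ n : ℕ, 1 ≤ n →
      |Ln n E - Ln n E'| ≤ C₁ * Γ ^ (n - 1) * |E - E'|) :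
    ∃ C > (0 : ℝ), ∃ β > (0 : ℝ), ∀ E ∈ I, ∀ E' ∈ I,
      |L E - L E'| ≤ C * |E - E'| ^ β := by
  have hΓ0 : (0:ℝ) < Γ := lt_trans one_pos hΓ
  have hlog : 0 < Real.log Γ := Real.log_pos hΓ
  set lg := Real.log Γ with hlg
  set D := c₀ + 2 * lg with hD
  have hD0 : 0 < D := by positivity
  set β : ℝ := c₀ / D with hβ
  have hβ0 : 0 < β := div_pos hc₀ hD0
  set C : ℝ := 2 * C₀ + 3 * C₁ * Γ ^ 4 + 3 * C₁ * Γ ^ 2 * (1 + |bI - aI|) with hC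
  have hC_pos : 0 < C := by positivity
  refine ⟨C, hC_pos, β, hβ0, ?_⟩
  intro E hE E' hE'
  have key := key_combined I L Ln C₀ C₁ c₀ Γ hC₁ hΓ happrox hlip E hE E' hE'
  set δ := |E - E'| with hδdef
  have hδ0 : 0 ≤ δ := abs_nonneg _
  have hδD : δ ≤ |bI - aI| := by
    rw [hI] at hE hE'
    have h1 := hE.1; have h2 := hE.2; have h3 := hE'.1; have h4 := hE'.2
    have : δ ≤ bI - aI := abs_sub_le_iff.mpr ⟨by linarith, by linarith⟩
    exact this.trans (le_abs_self _)
  rcases eq_or_lt_of_le hδ0 with hδz | hδpos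
  · -- δ = 0
    have hEE : E = E' := by
      have := abs_eq_zero.mp hδz.symm
      linarith [this]
    rw [hEE, sub_self, abs_zero]
    positivity
  rcases le_or_gt 1 δ with hδ1 | hδ1
  · -- δ ≥ 1 : use n = 1
    have hk := key 1 le_rfl
    norm_num at hk
    have hexp : Real.exp (-c₀) ≤ 1 := by
      rw [Real.exp_le_one_iff]; linarith
    have hrp : (1:ℝ) ≤ δ ^ β := Real.one_le_rpow hδ1 hβ0.le
    have hδb : δ ≤ (1 + |bI - aI|) * δ ^ β := by
      calc δ ≤ |bI - aI| := hδD
        _ ≤ |bI - aI| * δ ^ β := le_mul_of_one_le_right (abs_nonneg _) hrp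
        _ ≤ (1 + |bI - aI|) * δ ^ β := by nlinarith [Real.rpow_nonneg hδ0 β]
    have hb2 : 3 * C₁ * Γ ^ 2 * δ ≤ 3 * C₁ * Γ ^ 2 * ((1 + |bI - aI|) * δ ^ β) :=
      mul_le_mul_of_nonneg_left hδb (by positivity)
    have h2C₀ : 2 * C₀ * Real.exp (-c₀) ≤ 2 * C₀ * δ ^ β := by
      have h := hexp.trans hrp
      nlinarith
    have hrest : 0 ≤ 3 * C₁ * Γ ^ 4 * δ ^ β := by positivity
    rw [hC]
    nlinarith [hk, hb2, h2C₀, hrest]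
  · -- 0 < δ < 1
    have hlogδ : Real.log δ < 0 := Real.log_neg hδpos hδ1
    set t : ℝ := -Real.log δ with ht
    have ht0 : 0 < t := by linarith
    have hlogδt : Real.log δ = -t := by rw [ht]; ring
    set n : ℕ := ⌈t / D⌉₊ + 1 with hn
    have hn1 : 1 ≤ n := by omega
    have hcast : (n : ℝ) = (⌈t / D⌉₊ : ℝ) + 1 := by push_cast [hn]; ring
    have hnge : t / D ≤ (n : ℝ) := by
      rw [hcast]; linarith [Nat.le_ceil (t / D)]
    have hnle : (n : ℝ) ≤ t / D + 2 := by
      rw [hcast]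
      have := Nat.ceil_lt_add_one (show 0 ≤ t / D by positivity)
      linarith
    have hrpow : δ ^ β = Real.exp (Real.log δ * β) := Real.rpow_def_of_pos hδpos β
    have hβt : -t * β = -(c₀ * (t / D)) := by rw [hβ]; ring
    have hkey : c₀ * (t / D) + 2 * lg * (t / D) = t := by
      rw [hD]; field_simp
    -- exp bound
    have hexp_le : Real.exp (-c₀ * n) ≤ δ ^ β := by
      rw [hrpow, hlogδt, hβt]
      apply Real.exp_le_exp.mpr
      have := mul_le_mul_of_nonneg_left hnge hc₀.le
      linarith
    -- pow bound
    have hΓexp : ∀ m : ℕ, Γ ^ m = Real.exp (m * lg) := by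
      intro m
      rw [Real.exp_nat_mul, hlg, Real.exp_log hΓ0]
    have hΓpow : Γ ^ (2 * n) * δ ≤ Γ ^ 4 * δ ^ β := by
      have lhs_eq : Γ ^ (2 * n) * δ = Real.exp (((2 * n : ℕ) : ℝ) * lg + Real.log δ) := by
        rw [Real.exp_add, ← hΓexp (2 * n), Real.exp_log hδpos]
      have rhs_eq : Γ ^ 4 * δ ^ β = Real.exp (((4 : ℕ) : ℝ) * lg + Real.log δ * β) := by
        rw [Real.exp_add, ← hΓexp 4, hrpow]
      rw [lhs_eq, rhs_eq]
      apply Real.exp_le_exp.mpr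
      rw [hlogδt]
      have hmul : 2 * lg * (n : ℝ) ≤ 2 * lg * (t / D + 2) :=
        mul_le_mul_of_nonneg_left hnle (by positivity)
      push_cast
      nlinarith [hkey, hmul, hβt]
    have hk := key n hn1
    have hb1 : 2 * C₀ * Real.exp (-c₀ * n) ≤ 2 * C₀ * δ ^ β := by nlinarith
    have hb2 : 3 * C₁ * Γ ^ (2 * n) * δ ≤ 3 * C₁ * Γ ^ 4 * δ ^ β := by
      have := mul_le_mul_of_nonneg_left hΓpow (show (0:ℝ) ≤ 3 * C₁ by positivity)
      nlinarith
    have hrest : 0 ≤ 3 * C₁ * Γ ^ 2 * (1 + |bI - aI|) * δ ^ β := by positivity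
    rw [hC]
    nlinarith [hk, hb1, hb2, hrest]
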